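/- Equational characterization of Hoare triples: for a program p : TA and tests φ, ψ : P2, the filter-based Hoare triple {φ}p{ψ} (i.e., filter(p,φ,ψ) = p where filter removes executions satisfying φ before p but failing ψ after) holds if and only if (do x←φ; y←p; z←ψ; ret⟨x,y,z, x ⇒ z⟩) = (do x←φ; y←p; z←ψ; ret⟨x,y,z,⊤⟩). -/

import Mathlib

/-!
Both sides of the equation are programs of the shape `do x ← φ; y ← p; z ← ψ; k x y z`. Because tests
are copyable and discardable, running the filter in the middle of such a program amounts to guarding
the continuation `k` by `x ⇒ z`, and under that guard the two continuations
`ret ⟨x, y, z, x ⇒ z⟩` and `ret ⟨x, y, z, ⊤⟩` agree. Conversely, post-composing both sides with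
"return `y` if the last component holds, `∅` otherwise" turns the left side into `filter(p, φ, ψ)` and
the right side into `do φ; y ← p; ψ; ret y = p`.
-/

variable (m : Type → Type) [Monad m]

/-- A program `p : T A` is discardable if `(do y ← p; ret ⋆) = ret ⋆`. -/
def Discardable {A : Type} (p : m A) : Prop :=
  (do let _ ← p; pure PUnit.unit) = (pure PUnit.unit : m PUnit)

/-- A program `p : T A` is copyable. -/
def Copyable {A : Type} (p : m A) : Prop :=
  (do let x ← p; let y ← p; pure (x, y)) = (do let x ← p; pure (x, x) : m (A × A))

/-- Pure programs: discardable, copyable, and commuting with every discardable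
and copyable program; tests are pure Boolean-valued programs. -/
def IsPureProg {A : Type} (p : m A) : Prop :=
  Discardable m p ∧ Copyable m p ∧
    ∀ {B : Type} (q : m B), Discardable m q → Copyable m q →
      (do let x ← p; let y ← q; pure (x, y)) =
        ((do let y ← q; let x ← p; pure (x, y)) : m (A × B))

/-- `filter(p,φ,ψ) = do x←φ; y←p; z←ψ; if (x ⇒ z) then ret y else ∅`. -/
def filterProg (bot : ∀ A : Type, m A) {A : Type}
    (p : m A) (φ ψ : m Bool) : m A := do
  let x ← φ
  let y ← p
  let z ← ψ
  if (!x || z) then pure y else bot A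

section Programs

variable {m} [LawfulMonad m]

theorem Discardable.bind_const {A B : Type} {q : m A} (hq : Discardable m q) (k : m B) :
    (q >>= fun _ => k) = k := by
  calc (q >>= fun _ => k) = (q >>= fun _ => pure PUnit.unit) >>= fun _ => k := by simp
    _ = k := by rw [show (q >>= fun _ => pure PUnit.unit) = pure PUnit.unit from hq, pure_bind]

theorem Copyable.bind_bind {A B : Type} {q : m A} (hq : Copyable m q) (k : A → A → m B) :
    (q >>= fun x => q >>= fun y => k x y) = q >>= fun x => k x x := by
  simpa only [bind_assoc, pure_bind] using
    congrArg (fun t : m (A × A) => t >>= fun xy => k xy.1 xy.2) hq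

theorem Discardable.bind_bind_pure {A B C : Type} {φ : m A} {ψ : m C} (hφ : Discardable m φ)
    (hψ : Discardable m ψ) (p : m B) :
    (φ >>= fun _ => p >>= fun y => ψ >>= fun _ => pure y) = p := by
  simp only [hψ.bind_const, bind_pure, hφ.bind_const]

variable {bot : ∀ A : Type, m A}

theorem Discardable.guard_bind (bind_bot : ∀ {A B : Type} (f : A → m B), bot A >>= f = bot B)
    {A B C : Type} {ψ : m C} (hψ : Discardable m ψ) (c : Bool) (y : A)
    (k : A → C → m B) :
    ((if c then pure y else bot A) >>= fun y' => ψ >>= fun z => k y' z) =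
      ψ >>= fun z => if c then k y z else bot B := by
  cases c
  · simp only [Bool.false_eq_true, if_false, bind_bot, hψ.bind_const]
  · simp

theorem bind_filterProg_bind (bind_bot : ∀ {A B : Type} (f : A → m B), bot A >>= f = bot B)
    {A B : Type} {φ ψ : m Bool} (hφ : Copyable m φ) (hψd : Discardable m ψ) (hψc : Copyable m ψ)
    (p : m A) (k : Bool → A → Bool → m B) :
    (φ >>= fun x => filterProg m bot p φ ψ >>= fun y => ψ >>= fun z => k x y z) =
      φ >>= fun x => p >>= fun y => ψ >>= fun z => if (!x || z) then k x y z else bot B := by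
  simp only [filterProg, bind_assoc]
  rw [hφ.bind_bind fun x x' => p >>= fun y => ψ >>= fun z' =>
    (if (!x' || z') then pure y else bot A) >>= fun y' => ψ >>= fun z => k x y' z]
  refine bind_congr fun x => bind_congr fun y => ?_
  simp only [hψd.guard_bind bind_bot]
  exact hψc.bind_bind fun z' z => if (!x || z') then k x y z else bot B

end Programs

theorem hoare_triple_equational [LawfulMonad m]
    -- `T` is semi-additive with join structure `(δ, ϖ)`:
    (bot : ∀ A : Type, m A)
    (bind_bot : ∀ {A B : Type} (f : A → m B), (bot A) >>= f = bot B)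
    {A : Type} (p : m A) (φ ψ : m Bool)
    (hφ : IsPureProg m φ) (hψ : IsPureProg m ψ) :
    filterProg m bot p φ ψ = p ↔
      (do let x ← φ; let y ← p; let z ← ψ; pure (x, y, z, (!x || z))) =
        ((do let x ← φ; let y ← p; let z ← ψ; pure (x, y, z, true)) :
          m (Bool × A × Bool × Bool)) := by
  constructor
  · intro h
    rw [← h]
    simp only [bind_filterProg_bind bind_bot hφ.2.1 hψ.1 hψ.2.1]
    refine bind_congr fun x => bind_congr fun y => bind_congr fun z => ?_
    cases x <;> cases z <;> rfl
  · intro h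
    have select := congrArg
      (fun t : m (Bool × A × Bool × Bool) => t >>= fun w => if w.2.2.2 then pure w.2.1 else bot A) h
    simp only [bind_assoc, pure_bind, if_true] at select
    exact select.trans (hφ.1.bind_bind_pure hψ.1 p)
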